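/- arXiv:1809.08207 — 3 statements merged into one kernel-verified Lean document; each statement's English description precedes it below -/
import Mathlib

section
/- (Proposition 1: the repercussion-utility game is an exact potential game.) For every strategy profile a : M → Bool and every player i ∈ M, V(a) − V(flip_i a) = q_i(a) − q_i(flip_i a), where V(a) = ∑_{i ∈ M} U_i(a). -/
/-- Flip the action of player `i` in profile `a`. -/
def flipProfile {M : Type*} [DecidableEq M] (i : M) (a : M → Bool) : M → Bool :=
  Function.update a i (!a i)

/-- Repercussion utility of player `i`: its own utility plus, if it is active,
the change its presence causes to its neighbors' utilities. -/
noncomputable def repUtil {M : Type*} [DecidableEq M] (N : M → Finset M)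
    (U : M → (M → Bool) → ℝ) (i : M) (a : M → Bool) : ℝ :=
  if a i then U i a + ∑ j ∈ N i, (U j a - U j (flipProfile i a)) else U i a

/-- Potential function: sum of the players' original utilities. -/
noncomputable def pot {M : Type*} [Fintype M] (U : M → (M → Bool) → ℝ)
    (a : M → Bool) : ℝ :=
  ∑ i, U i a

/-!
Flipping the action of `i` can change only the utilities of `i` and of its neighbours, since a
utility is local and `i ∈ N j ↔ j ∈ N i`. So `V(a) - V(flip_i a)` is the sum of these changes,
and the repercussion term of `q_i` records exactly the neighbours' part: it is counted in
`q_i(a)` when `a i` is true and, with the opposite sign, in `q_i(flip_i a)` when it is false.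
-/

section

variable {M : Type*} [DecidableEq M]

@[simp]
lemma flipProfile_apply_self (i : M) (a : M → Bool) : flipProfile i a i = !a i :=
  Function.update_self i _ a

lemma flipProfile_apply_of_ne {i j : M} (h : j ≠ i) (a : M → Bool) :
    flipProfile i a j = a j :=
  Function.update_of_ne h _ a

@[simp]
lemma flipProfile_flipProfile (i : M) (a : M → Bool) :
    flipProfile i (flipProfile i a) = a := by
  funext j
  by_cases h : j = i
  · subst h; simp
  · rw [flipProfile_apply_of_ne h, flipProfile_apply_of_ne h]

lemma apply_flipProfile_of_not_mem {S : Finset M} {V : (M → Bool) → ℝ}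
    (hV : ∀ a a' : M → Bool, (∀ k ∈ S, a k = a' k) → V a = V a')
    {i : M} (hi : i ∉ S) (a : M → Bool) : V (flipProfile i a) = V a :=
  hV _ _ fun _ hk => flipProfile_apply_of_ne (ne_of_mem_of_not_mem hk hi) a

lemma repUtil_sub_repUtil_flipProfile (N : M → Finset M) (U : M → (M → Bool) → ℝ)
    (i : M) (a : M → Bool) :
    repUtil N U i a - repUtil N U i (flipProfile i a) =
      U i a - U i (flipProfile i a) + ∑ j ∈ N i, (U j a - U j (flipProfile i a)) := by
  cases h : a i <;>
    simp only [repUtil, h, flipProfile_apply_self, flipProfile_flipProfile, Bool.not_false,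
      Bool.not_true, Bool.false_eq_true, if_true, if_false, Finset.sum_sub_distrib] <;>
    ring

lemma pot_sub_pot_flipProfile [Fintype M] {N : M → Finset M} {U : M → (M → Bool) → ℝ}
    (hsym : ∀ i j, j ∈ N i ↔ i ∈ N j)
    (hloc : ∀ i (a a' : M → Bool),
      (∀ j, j = i ∨ j ∈ N i → a j = a' j) → U i a = U i a')
    (i : M) (a : M → Bool) :
    pot U a - pot U (flipProfile i a) =
      ∑ j ∈ insert i (N i), (U j a - U j (flipProfile i a)) := by
  rw [pot, pot, ← Finset.sum_sub_distrib]
  refine (Finset.sum_subset (Finset.subset_univ _) fun j _ hj => ?_).symm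
  rw [Finset.mem_insert, not_or] at hj
  have hi : i ∉ insert j (N j) := by
    rw [Finset.mem_insert, not_or, ← hsym]
    exact ⟨Ne.symm hj.1, hj.2⟩
  have hlocj : ∀ a a' : M → Bool, (∀ k ∈ insert j (N j), a k = a' k) → U j a = U j a' :=
    fun a a' h => hloc j a a' fun k hk => h k (Finset.mem_insert.mpr hk)
  rw [apply_flipProfile_of_not_mem hlocj hi a, sub_self]

end

theorem repercussion_game_is_potential_game_general
    {M : Type*} [Fintype M] [DecidableEq M]
    (N : M → Finset M) (U : M → (M → Bool) → ℝ)
    (hself : ∀ i, i ∉ N i)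
    (hsym : ∀ i j, j ∈ N i ↔ i ∈ N j)
    (hloc : ∀ i (a a' : M → Bool),
      (∀ j, j = i ∨ j ∈ N i → a j = a' j) → U i a = U i a')
    (a : M → Bool) (i : M) :
    pot U a - pot U (flipProfile i a) =
      repUtil N U i a - repUtil N U i (flipProfile i a) := by
  rw [pot_sub_pot_flipProfile hsym hloc, Finset.sum_insert (hself i),
    repUtil_sub_repUtil_flipProfile]

/-- Proposition 1: the repercussion-utility game is an exact potential game with
potential `V = ∑ i, U i`. -/
theorem repercussion_game_is_potential_game
    {M : Type*} [Fintype M] [DecidableEq M] [Nonempty M]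
    (N : M → Finset M) (U : M → (M → Bool) → ℝ)
    (hself : ∀ i, i ∉ N i)
    (hsym : ∀ i j, j ∈ N i ↔ i ∈ N j)
    (hloc : ∀ i (a a' : M → Bool),
      (∀ j, j = i ∨ j ∈ N i → a j = a' j) → U i a = U i a')
    (a : M → Bool) (i : M) :
    pot U a - pot U (flipProfile i a) =
      repUtil N U i a - repUtil N U i (flipProfile i a) :=
  repercussion_game_is_potential_game_general N U hself hsym hloc a i
end

section
/- (Finite improvement property, used for convergence of the learning algorithm.) There is no infinite sequence of strict unilateral improvements in the repercussion game: there exists no sequence of profiles a^0, a^1, a^2, … : M → Bool together with players i_0, i_1, … ∈ M such that for every t ∈ ℕ, a^{t+1} = flip_{i_t} a^t and q_{i_t}(a^{t+1}) > q_{i_t}(a^t). -/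
/-- Finite improvement property: there is no infinite sequence of strict
unilateral improvements in the repercussion game. -/
theorem no_infinite_improvement_path
    {M : Type*} [Fintype M] [DecidableEq M] [Nonempty M]
    (N : M → Finset M) (U : M → (M → Bool) → ℝ)
    (hself : ∀ i, i ∉ N i)
    (hsym : ∀ i j, j ∈ N i ↔ i ∈ N j)
    (hloc : ∀ i (a a' : M → Bool),
      (∀ j, j = i ∨ j ∈ N i → a j = a' j) → U i a = U i a') :
    ¬ ∃ (a : ℕ → M → Bool) (ip : ℕ → M),
        ∀ t : ℕ, a (t + 1) = flipProfile (ip t) (a t) ∧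
          repUtil N U (ip t) (a t) < repUtil N U (ip t) (a (t + 1)) := by
  rintro ⟨a, ip, h⟩
  set Φ : (M → Bool) → ℝ := fun b => ∑ j, U j b with hΦ
  have hflipflip : ∀ (i : M) (b : M → Bool), flipProfile i (flipProfile i b) = b := by
    intro i b
    funext k
    by_cases hk : k = i
    · subst hk; simp [flipProfile]
    · simp [flipProfile, Function.update_of_ne hk]
  have hlocflip : ∀ (i j : M) (b : M → Bool), j ≠ i → j ∉ N i →
      U j (flipProfile i b) = U j b := by
    intro i j b hji hjN
    apply hloc j
    intro k hk
    have hki : k ≠ i := by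
      rcases hk with rfl | hk
      · exact hji
      · intro hk'; exact hjN ((hsym i j).mpr (by rw [← hk']; exact hk))
    simp [flipProfile, Function.update_of_ne hki]
  have hdiff : ∀ (i : M) (b : M → Bool),
      Φ (flipProfile i b) - Φ b =
        (U i (flipProfile i b) - U i b) + ∑ j ∈ N i, (U j (flipProfile i b) - U j b) := by
    intro i b
    have h1 : Φ (flipProfile i b) - Φ b = ∑ j, (U j (flipProfile i b) - U j b) := by
      simp [hΦ, Finset.sum_sub_distrib]
    rw [h1, ← Finset.sum_subset (Finset.subset_univ (insert i (N i)))]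
    · rw [Finset.sum_insert (hself i)]
    · intro j _ hj
      simp only [Finset.mem_insert] at hj
      push_neg at hj
      rw [hlocflip i j b hj.1 hj.2]; ring
  have key : ∀ (i : M) (b : M → Bool),
      repUtil N U i (flipProfile i b) - repUtil N U i b = Φ (flipProfile i b) - Φ b := by
    intro i b
    rw [hdiff]
    by_cases hb : b i
    · have hbi : (flipProfile i b) i = false := by simp [flipProfile, hb]
      simp only [repUtil, hbi, hb, Bool.false_eq_true, if_false, if_true]
      rw [Finset.sum_sub_distrib, Finset.sum_sub_distrib]
      ring
    · have hb' : b i = false := Bool.not_eq_true _ ▸ hb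
      have hbi : (flipProfile i b) i = true := by simp [flipProfile, hb']
      simp only [repUtil, hbi, hb', Bool.false_eq_true, if_false, if_true, hflipflip]
      rw [Finset.sum_sub_distrib]
      ring
  have hmono : StrictMono (fun t => Φ (a t)) := by
    apply strictMono_nat_of_lt_succ
    intro t
    obtain ⟨heq, hlt⟩ := h t
    have := key (ip t) (a t)
    rw [← heq] at this
    linarith
  have hinj : Function.Injective a := by
    intro s t hst
    exact hmono.injective (by simp [hst])
  obtain ⟨x, y, hxy, hfeq⟩ := Finite.exists_ne_map_eq_of_infinite a
  exact hxy (hinj hfeq)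
end

section
/- (The radial-basis covariance matrix is a valid covariance matrix.) Let n ∈ ℕ, let x_1, …, x_n be points in the Euclidean plane ℝ², and let β ≥ 0 and λ > 0 be real numbers. Then the n × n real matrix Σ with entries Σ_{ij} = β · exp(−‖x_i − x_j‖² / (2λ²)) is symmetric and positive semidefinite. -/
/-!
Expanding the square, `exp (-‖a - b‖² / 2s) = g a * g b * exp (⟪a, b⟫ / s)` with
`g a = exp (-‖a‖² / 2s)`, so the Gaussian kernel matrix is the Hadamard product of the rank-one
matrix `g gᵀ` with the entrywise exponential of the Gram matrix `s⁻¹ ⟪x i, x j⟫`. By the Schur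
product theorem, entrywise powers of a positive semidefinite matrix are positive semidefinite;
the entrywise exponential is a limit of nonnegative combinations of them, hence positive
semidefinite as well, and so is the Hadamard product.
-/

open Real
open scoped ComplexOrder InnerProductSpace Nat

theorem Real.exp_neg_norm_sub_sq_div {E : Type*} [NormedAddCommGroup E] [InnerProductSpace ℝ E]
    (a b : E) (s : ℝ) :
    exp (-‖a - b‖ ^ 2 / (2 * s)) =
      exp (-‖a‖ ^ 2 / (2 * s)) * exp (-‖b‖ ^ 2 / (2 * s)) * exp (⟪a, b⟫_ℝ / s) := by
  rw [← exp_add, ← exp_add, norm_sub_sq_real]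
  ring_nf

namespace Matrix

variable {ι 𝕜 : Type*} [RCLike 𝕜]

theorem isClosed_setOf_posSemidef : IsClosed {A : Matrix ι ι 𝕜 | A.PosSemidef} := by
  have hHermitian : IsClosed {A : Matrix ι ι 𝕜 | A.IsHermitian} :=
    isClosed_eq continuous_id.matrix_conjTranspose continuous_id
  have hForm (x : ι →₀ 𝕜) : IsClosed {A : Matrix ι ι 𝕜 |
      0 ≤ x.sum fun i xi ↦ x.sum fun j xj ↦ star xi * A i j * xj} :=
    isClosed_le continuous_const (by unfold Finsupp.sum; fun_prop)
  simpa only [PosSemidef, Set.ofPred_and, Set.ofPred_forall] using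
    hHermitian.inter (isClosed_iInter hForm)

theorem PosSemidef.map_pow [Finite ι] {A : Matrix ι ι 𝕜} (hA : A.PosSemidef) (k : ℕ) :
    (A.map (· ^ k)).PosSemidef := by
  induction k with
  | zero =>
    have hOnes : A.map (· ^ 0) = vecMulVec 1 (star 1) := by ext; simp [vecMulVec_apply]
    exact hOnes ▸ posSemidef_vecMulVec_self_star 1
  | succ k ih =>
    have hSucc : A.map (· ^ (k + 1)) = A.map (· ^ k) ⊙ A := by ext; simp [pow_succ]
    exact hSucc ▸ ih.hadamard hA

theorem PosSemidef.map_exp [Finite ι] {A : Matrix ι ι ℝ} (hA : A.PosSemidef) :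
    (A.map exp).PosSemidef := by
  have hSeries : HasSum (fun k ↦ (k !⁻¹ : ℝ) • A.map (· ^ k)) (A.map exp) :=
    Pi.hasSum.2 fun i ↦ Pi.hasSum.2 fun j ↦ by
      simpa [exp_eq_exp_ℝ] using NormedSpace.exp_series_hasSum_exp' (𝕂 := ℝ) (A i j)
  exact isClosed_setOf_posSemidef.mem_of_tendsto hSeries.tendsto_sum_nat <|
    .of_forall fun _ ↦ posSemidef_sum _ fun k _ ↦ (hA.map_pow k).smul (by positivity)

theorem posSemidef_exp_neg_norm_sub_sq_div {E : Type*} [Finite ι]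
    [NormedAddCommGroup E] [InnerProductSpace ℝ E] (x : ι → E) {s : ℝ} (hs : 0 ≤ s) :
    (of fun i j ↦ exp (-‖x i - x j‖ ^ 2 / (2 * s))).PosSemidef := by
  set g : ι → ℝ := fun i ↦ exp (-‖x i‖ ^ 2 / (2 * s))
  have hFactor : of (fun i j ↦ exp (-‖x i - x j‖ ^ 2 / (2 * s))) =
      vecMulVec g (star g) ⊙ (s⁻¹ • gram ℝ x).map exp := by
    ext i j
    rw [of_apply, exp_neg_norm_sub_sq_div]
    simp [g, vecMulVec_apply, gram_apply, div_eq_inv_mul]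
  have hExpGram : ((s⁻¹ • gram ℝ x).map exp).PosSemidef :=
    ((posSemidef_gram ℝ x).smul (inv_nonneg.2 hs)).map_exp
  exact hFactor ▸ (posSemidef_vecMulVec_self_star g).hadamard hExpGram

end Matrix

theorem rbf_kernel_matrix_posSemidef_general (n : ℕ)
    (x : Fin n → EuclideanSpace ℝ (Fin 2)) (β lam : ℝ)
    (hβ : 0 ≤ β) :
    (Matrix.of fun i j : Fin n =>
      β * Real.exp (-‖x i - x j‖ ^ 2 / (2 * lam ^ 2))).IsSymm ∧
    (Matrix.of fun i j : Fin n =>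
      β * Real.exp (-‖x i - x j‖ ^ 2 / (2 * lam ^ 2))).PosSemidef := by
  have hPSD : (Matrix.of fun i j : Fin n =>
      β * Real.exp (-‖x i - x j‖ ^ 2 / (2 * lam ^ 2))).PosSemidef :=
    (Matrix.posSemidef_exp_neg_norm_sub_sq_div x (sq_nonneg lam)).smul hβ
  exact ⟨Matrix.isHermitian_iff_isSymm.1 hPSD.1, hPSD⟩

/-- The radial-basis (Gaussian) kernel covariance matrix
`Σ i j = β · exp(−‖x i − x j‖² / (2 λ²))` built from points `x₁, …, xₙ` in the
Euclidean plane, with amplitude `β ≥ 0` and length scale `λ > 0`, is symmetric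
and positive semidefinite — hence a valid covariance matrix for a multivariate
Gaussian distribution. -/
theorem rbf_kernel_matrix_posSemidef (n : ℕ)
    (x : Fin n → EuclideanSpace ℝ (Fin 2)) (β lam : ℝ)
    (hβ : 0 ≤ β) (hlam : 0 < lam) :
    (Matrix.of fun i j : Fin n =>
      β * Real.exp (-‖x i - x j‖ ^ 2 / (2 * lam ^ 2))).IsSymm ∧
    (Matrix.of fun i j : Fin n =>
      β * Real.exp (-‖x i - x j‖ ^ 2 / (2 * lam ^ 2))).PosSemidef :=
  rbf_kernel_matrix_posSemidef_general n x β lam hβ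
end
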